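/- The set Per(g_{1,∞}) of periodic points of the NADS (Σ, g_{1,∞}) is dense in Σ: for every x ∈ Σ and every δ > 0 there exists a periodic point η of g_{1,∞} with d(x,η) < δ. -/

import Mathlib

/-- The symbolic space `Σ = {0,1}^ℕ`; here `x : BinSeq` is 0-indexed, so `x n`
represents the symbol `x_{n+1}` of the paper. -/
abbrev BinSeq : Type := ℕ → Bool

/-- The shift map `σ(x₁x₂x₃⋯) = x₂x₃⋯`. -/
def shift (x : BinSeq) : BinSeq := fun n => x (n + 1)

/-- The metric `d(x,y) = Σ_{n≥1} |x_n − y_n| / 2^n` on `Σ` (with our 0-indexing, symbol `n`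
contributes `1/2^{n+1}`). -/
noncomputable def dS (x y : BinSeq) : ℝ :=
  ∑' n : ℕ, (if x n = y n then (0 : ℝ) else 1) / 2 ^ (n + 1)

/-- `tm n` is the Thue–Morse symbol `ξ_{n+1}`: the parity of the number of ones in the
binary expansion of `n` (i.e. of `(n+1) − 1`); `true` encodes `1` and `false` encodes `0`. -/
def tm (n : ℕ) : Bool := (Nat.digits 2 n).sum % 2 == 1

/-- `g i` is the map `g_{i+1}` of the NADS: `σ` if `ξ_{i+1} = 0` and `σ²` if `ξ_{i+1} = 1`. -/
def g (i : ℕ) : BinSeq → BinSeq := if tm i then shift ∘ shift else shift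

/-- `gComp n = g_1^{(n)} = g_n ∘ g_{n-1} ∘ ⋯ ∘ g_1`. -/
def gComp : ℕ → BinSeq → BinSeq
  | 0 => id
  | n + 1 => g n ∘ gComp n

/-- A set `U ⊆ Σ` is open for the metric `d`. -/
def IsOpenS (U : Set BinSeq) : Prop :=
  ∀ x ∈ U, ∃ ε : ℝ, 0 < ε ∧ ∀ y : BinSeq, dS x y < ε → y ∈ U

/-- `x` is a periodic point of the NADS `g_{1,∞}`: there is `n ≥ 1` with
`g_1^{(nk)}(x) = x` for all `k ≥ 0`. -/
def IsGPeriodicPt (x : BinSeq) : Prop :=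
  ∃ n : ℕ, 1 ≤ n ∧ ∀ k : ℕ, gComp (n * k) x = x

/-- The orbit `orb(x, g_{1,∞}) = {g_1^{(n)}(x) : n ≥ 0}`. -/
def gOrbit (x : BinSeq) : Set BinSeq :=
  Set.range fun n : ℕ => gComp n x

/-!
Each `g_i` is a power of the shift, so `g_1^{(n)} = σ^{c(n)}` with `c(n) = Σ_{i ≤ n} (1 + ξ_i)`.
The Thue–Morse symbols `ξ_{2m+1}, ξ_{2m+2}` are complementary, so `c(2N) = 3N`: every
`σ`-periodic point of period `3N` is a periodic point of `g_{1,∞}` with period `2N`. Repeating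
the first `3N` symbols of `x` gives such a point within `2^{-3N}` of `x`.
-/

def gShiftCount : ℕ → ℕ
  | 0 => 0
  | n + 1 => gShiftCount n + if tm n then 2 else 1

lemma shift_iterate_apply (j : ℕ) (x : BinSeq) (n : ℕ) : shift^[j] x n = x (n + j) := by
  induction j generalizing x with
  | zero => rfl
  | succ j ih => rw [Function.iterate_succ_apply, ih, shift, Nat.add_assoc]

lemma gComp_eq_shift_iterate (n : ℕ) (x : BinSeq) : gComp n x = shift^[gShiftCount n] x := by
  induction n with
  | zero => rfl
  | succ n ih =>
    change g n (gComp n x) = _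
    rw [ih, gShiftCount, Nat.add_comm, Function.iterate_add_apply]
    cases htm : tm n <;> simp [g, htm]

lemma tm_two_mul (m : ℕ) : tm (2 * m) = tm m := by
  rcases Nat.eq_zero_or_pos m with rfl | hm
  · rfl
  · unfold tm
    rw [Nat.digits_def' (by norm_num) (by omega), Nat.mul_mod_right,
      Nat.mul_div_cancel_left _ (by norm_num)]
    simp

lemma tm_two_mul_add_one (m : ℕ) : tm (2 * m + 1) = !tm m := by
  unfold tm
  rw [Nat.digits_def' (by norm_num) (by omega),
    show (2 * m + 1) % 2 = 1 by omega, show (2 * m + 1) / 2 = m by omega, List.sum_cons]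
  rcases Nat.mod_two_eq_zero_or_one (Nat.digits 2 m).sum with h | h <;>
    simp [Nat.add_mod, h]

lemma gShiftCount_two_mul (N : ℕ) : gShiftCount (2 * N) = 3 * N := by
  induction N with
  | zero => rfl
  | succ N ih =>
    rw [show 2 * (N + 1) = 2 * N + 1 + 1 by ring, gShiftCount, gShiftCount, ih,
      tm_two_mul_add_one, tm_two_mul]
    cases tm N <;> simp <;> ring

lemma isGPeriodicPt_of_periodic {η : BinSeq} {N : ℕ} (hN : 0 < N)
    (hη : Function.Periodic η (3 * N)) : IsGPeriodicPt η := by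
  refine ⟨2 * N, by omega, fun k => ?_⟩
  rw [Nat.mul_assoc, gComp_eq_shift_iterate, gShiftCount_two_mul]
  funext n
  rw [shift_iterate_apply, show 3 * (N * k) = k * (3 * N) by ring]
  exact hη.nat_mul k n

lemma dS_le_of_eq_of_lt {x y : BinSeq} {p : ℕ} (h : ∀ n < p, x n = y n) :
    dS x y ≤ (1 / 2) ^ p := by
  set f : ℕ → ℝ := fun n => (if x n = y n then (0 : ℝ) else 1) / 2 ^ (n + 1)
  have hf_nonneg : ∀ n, 0 ≤ f n := fun n => by positivity
  have hf_le : ∀ n, f n ≤ 1 / 2 / 2 ^ n := fun n => by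
    rw [div_div, ← pow_succ']
    exact div_le_div_of_nonneg_right (by split <;> norm_num) (by positivity)
  have hf : Summable f := (summable_geometric_two' 1).of_nonneg_of_le hf_nonneg hf_le
  have h_head : ∑ n ∈ Finset.range p, f n = 0 :=
    Finset.sum_eq_zero fun n hn => by simp [f, h n (Finset.mem_range.mp hn)]
  have h_tail (n : ℕ) : f (n + p) ≤ (1 / 2) ^ p / 2 / 2 ^ n := by
    calc f (n + p) ≤ 1 / 2 / 2 ^ (n + p) := hf_le _
      _ = (1 / 2) ^ p / 2 / 2 ^ n := by rw [pow_add, one_div_pow]; field_simp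
  calc dS x y = ∑' n, f (n + p) := by rw [dS, ← hf.sum_add_tsum_nat_add p, h_head, zero_add]
    _ ≤ ∑' n : ℕ, (1 / 2) ^ p / 2 / 2 ^ n :=
      Summable.tsum_le_tsum h_tail ((summable_nat_add_iff p).mpr hf) (summable_geometric_two' _)
    _ = (1 / 2) ^ p := tsum_geometric_two' _

/-- The set of periodic points of the NADS `(Σ, g_{1,∞})` is dense: every point of `Σ` is
within `δ` of a periodic point, for every `δ > 0`. -/
theorem gPeriodicPts_dense :
    ∀ x : BinSeq, ∀ δ : ℝ, 0 < δ → ∃ η : BinSeq, IsGPeriodicPt η ∧ dS x η < δ := by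
  intro x δ hδ
  obtain ⟨N, hN⟩ := exists_pow_lt_of_lt_one hδ (by norm_num : (1 / 2 : ℝ) < 1)
  set p := 3 * (N + 1)
  have h_periodic : Function.Periodic (fun n => x (n % p)) p := fun n => by
    simp only [Nat.add_mod_right]
  refine ⟨fun n => x (n % p), isGPeriodicPt_of_periodic N.succ_pos h_periodic, ?_⟩
  calc dS x (fun n => x (n % p)) ≤ (1 / 2) ^ p :=
        dS_le_of_eq_of_lt fun n hn => by rw [Nat.mod_eq_of_lt hn]
    _ ≤ (1 / 2) ^ N := pow_le_pow_of_le_one (by norm_num) (by norm_num) (by omega)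
    _ < δ := hN
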